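/- arXiv:1511.09220 — 6 statements merged into one kernel-verified Lean document; each statement's English description precedes it below -/
import Mathlib

section
/- For every integer n ≥ 3, the sum over i = 1 to n−2 of sin²(π/n) / (sin(iπ/n)·sin((i+1)π/n)) equals 2·cos(π/n). -/
open Real Finset

/-! Since `sin (π/n) = sin ((i+1)π/n - iπ/n)`, each summand equals
`sin (π/n) * (cot (iπ/n) - cot ((i+1)π/n))`. The sum telescopes to
`sin (π/n) * (cot (π/n) - cot (π - π/n)) = 2 sin (π/n) cot (π/n) = 2 cos (π/n)`. -/

theorem Real.sin_div_sin_mul_sin_add {x h : ℝ} (hx : sin x ≠ 0) (hxh : sin (x + h) ≠ 0) :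
    sin h / (sin x * sin (x + h)) = cot x - cot (x + h) := by
  have hsin : sin h = cos x * sin (x + h) - sin x * cos (x + h) := by
    rw [sin_add, cos_add]
    linear_combination (-sin h) * sin_sq_add_cos_sq x
  rw [hsin, cot_eq_cos_div_sin, cot_eq_cos_div_sin, div_sub_div _ _ hx hxh]

theorem Real.cot_pi_sub (x : ℝ) : cot (π - x) = -cot x := by
  rw [cot_eq_cos_div_sin, cot_eq_cos_div_sin, cos_pi_sub, sin_pi_sub, neg_div]

theorem Real.sin_nat_mul_pi_div_pos {i n : ℕ} (hi : 0 < i) (hin : i < n) :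
    0 < sin (i * π / n) := by
  have hn : (0 : ℝ) < n := Nat.cast_pos.2 (hi.trans hin)
  apply sin_pos_of_pos_of_lt_pi (by positivity)
  rw [div_lt_iff₀ hn, mul_comm π]
  exact mul_lt_mul_of_pos_right (Nat.cast_lt.2 hin) pi_pos

theorem sum_sin_sq_div_eq (n : ℕ) (hn : 3 ≤ n) :
    ∑ i ∈ Finset.Icc 1 (n - 2),
      Real.sin (Real.pi / n) ^ 2 /
        (Real.sin (i * Real.pi / n) * Real.sin ((i + 1) * Real.pi / n)) =
      2 * Real.cos (Real.pi / n) := by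
  set f : ℕ → ℝ := fun i ↦ cot (i * π / n) with hf
  have hstep (i : ℕ) : ((i : ℝ) + 1) * π / n = i * π / n + π / n := by ring
  have hsin {i : ℕ} (hi : 0 < i) (hin : i < n) : sin (i * π / n) ≠ 0 :=
    (sin_nat_mul_pi_div_pos hi hin).ne'
  have hterm : ∀ i ∈ Icc 1 (n - 2), sin (π / n) ^ 2 / (sin (i * π / n) * sin ((i + 1) * π / n)) =
      -sin (π / n) * (f (i + 1) - f i) := by
    intro i hi
    obtain ⟨hi1, hin⟩ := mem_Icc.1 hi
    have hsucc := hsin (i := i + 1) (by omega) (by omega)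
    push_cast at hsucc
    rw [hstep] at hsucc ⊢
    rw [sq, mul_div_assoc, sin_div_sin_mul_sin_add (hsin hi1 (by omega)) hsucc, hf]
    push_cast
    rw [hstep]
    ring
  have hlast : ((n - 2 + 1 : ℕ) : ℝ) * π / n = π - π / n := by
    have hn0 : (n : ℝ) ≠ 0 := by positivity
    rw [show n - 2 + 1 = n - 1 by omega, Nat.cast_sub (by omega)]
    field_simp
    ring
  have hsin1 : sin (π / n) ≠ 0 := by simpa using hsin (i := 1) one_pos (by omega)
  rw [sum_congr rfl hterm, ← mul_sum, sum_Icc_sub (by omega), hf]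
  dsimp only
  rw [hlast, cot_pi_sub, Nat.cast_one, one_mul, cot_eq_cos_div_sin]
  field_simp
  ring
end

section
/- Let H be a finite-dimensional Hilbert space, ψ ∈ H a unit vector, and let Z_A, X_A be self-adjoint unitaries (Z_A² = X_A² = 1) with {X_A, Z_A}ψ = 0 (i.e., (X_A Z_A + Z_A X_A)ψ = 0), and let X_B be a unitary commuting with both X_A and Z_A such that X_Bψ = X_Aψ. Then ⟨ψ|Z_A|ψ⟩ = 0. -/
open ContinuousLinearMap

theorem junk_overlap_zero
    {H : Type*} [NormedAddCommGroup H] [InnerProductSpace ℂ H] [CompleteSpace H]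
    [FiniteDimensional ℂ H]
    (ψ : H) (hψ : ‖ψ‖ = 1)
    (XA ZA XB : H →L[ℂ] H)
    (hXAsa : IsSelfAdjoint XA) (hZAsa : IsSelfAdjoint ZA)
    (hXA2 : XA ∘L XA = 1) (hZA2 : ZA ∘L ZA = 1)
    -- anticommutation on ψ
    (hanti : (XA ∘L ZA + ZA ∘L XA) ψ = 0)
    -- XB is unitary, commutes with XA and ZA, and XB ψ = XA ψ
    (hXBunit : (ContinuousLinearMap.adjoint XB) ∘L XB = 1)
    (hXBunit' : XB ∘L (ContinuousLinearMap.adjoint XB) = 1)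
    (hcomm1 : XB ∘L XA = XA ∘L XB) (hcomm2 : XB ∘L ZA = ZA ∘L XB)
    (hXBψ : XB ψ = XA ψ) :
    (inner ℂ ψ (ZA ψ) : ℂ) = 0 := by
  have h1 : XA (ZA ψ) = -(ZA (XA ψ)) := by
    have := hanti
    simp only [ContinuousLinearMap.add_apply, ContinuousLinearMap.comp_apply] at this
    linear_combination (norm := abel) this
  have hconj : (ContinuousLinearMap.adjoint XB) ∘L (ZA ∘L XB) = ZA := by
    rw [← hcomm2, ← ContinuousLinearMap.comp_assoc, hXBunit]; ext x; simp
  have key : (inner ℂ ψ (ZA ψ) : ℂ) = - inner ℂ ψ (ZA ψ) := by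
    calc (inner ℂ ψ (ZA ψ) : ℂ)
        = inner ℂ ψ ((XA ∘L (XA ∘L ZA)) ψ) := by
          have : XA ∘L (XA ∘L ZA) = ZA := by
            rw [← ContinuousLinearMap.comp_assoc, hXA2]; ext x; simp
          rw [this]
      _ = inner ℂ (XA ψ) (XA (ZA ψ)) := by
          simp only [ContinuousLinearMap.comp_apply]
          nth_rewrite 1 [← hXAsa.adjoint_eq]
          rw [ContinuousLinearMap.adjoint_inner_right]
      _ = - inner ℂ (XA ψ) (ZA (XA ψ)) := by rw [h1, inner_neg_right]
      _ = - inner ℂ (XB ψ) (ZA (XB ψ)) := by rw [hXBψ]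
      _ = - inner ℂ ψ ((ContinuousLinearMap.adjoint XB) ((ZA ∘L XB) ψ)) := by
          rw [ContinuousLinearMap.adjoint_inner_right]
          simp [ContinuousLinearMap.comp_apply]
      _ = - inner ℂ ψ (ZA ψ) := by
          rw [show (ContinuousLinearMap.adjoint XB) ((ZA ∘L XB) ψ)
              = ((ContinuousLinearMap.adjoint XB) ∘L (ZA ∘L XB)) ψ from rfl, hconj]
  linear_combination key / 2
end

section
/- Let H_A, H_B be Hilbert spaces and ψ ∈ H_A ⊗ H_B a unit vector. Let X_A, Z_A be self-adjoint unitaries on H_A and X_B, Z_B self-adjoint unitaries on H_B such that (X_A ⊗ X_B)ψ = ψ, (Z_A ⊗ Z_B)ψ = ψ, and ((X_A Z_A + Z_A X_A) ⊗ 1)ψ = 0. Define the (possibly unnormalized) vector φ = (1/(2√2))·((1 + Z_A) ⊗ 1)² ψ. Then ‖φ‖ = 1. -/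
open ContinuousLinearMap

/-- Operators `XA, ZA` act on Alice's factor and `XB, ZB` on Bob's factor of the joint
Hilbert space `H`; this is encoded by requiring that Alice's operators commute with
Bob's. The vector `φ = (1/(2√2)) • (1 + ZA)² ψ` is the candidate junk state. -/
theorem junk_state_norm_one
    {H : Type*} [NormedAddCommGroup H] [InnerProductSpace ℂ H] [CompleteSpace H]
    (ψ : H) (hψ : ‖ψ‖ = 1)
    (XA ZA XB ZB : H →L[ℂ] H)
    (hXAsa : IsSelfAdjoint XA) (hZAsa : IsSelfAdjoint ZA)
    (hXBsa : IsSelfAdjoint XB) (hZBsa : IsSelfAdjoint ZB)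
    (hXA2 : XA ∘L XA = 1) (hZA2 : ZA ∘L ZA = 1)
    (hXB2 : XB ∘L XB = 1) (hZB2 : ZB ∘L ZB = 1)
    -- Alice's operators commute with Bob's
    (hc1 : XA ∘L XB = XB ∘L XA) (hc2 : XA ∘L ZB = ZB ∘L XA)
    (hc3 : ZA ∘L XB = XB ∘L ZA) (hc4 : ZA ∘L ZB = ZB ∘L ZA)
    -- (X_A ⊗ X_B) ψ = ψ and (Z_A ⊗ Z_B) ψ = ψ
    (hXX : (XA ∘L XB) ψ = ψ) (hZZ : (ZA ∘L ZB) ψ = ψ)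
    -- anticommutation of X_A and Z_A on ψ
    (hanti : (XA ∘L ZA + ZA ∘L XA) ψ = 0)
    (φ : H)
    (hφ : φ = (1 / (2 * Real.sqrt 2) : ℝ) • (((1 + ZA) ∘L (1 + ZA)) ψ)) :
    ‖φ‖ = 1 := by
  have symXA := hXAsa.isSymmetric
  have symXB := hXBsa.isSymmetric
  have symZA := hZAsa.isSymmetric
  have hanti' : ZA (XA ψ) = -(XA (ZA ψ)) := by
    have h := hanti
    simp only [add_apply, comp_apply] at h
    exact eq_neg_of_add_eq_zero_left (by rw [add_comm]; exact h)
  have hXA2' : ∀ v, XA (XA v) = v := fun v => by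
    have := congrFun (congrArg DFunLike.coe hXA2) v
    simpa using this
  have hXB2' : ∀ v, XB (XB v) = v := fun v => by
    have := congrFun (congrArg DFunLike.coe hXB2) v
    simpa using this
  have hZA2' : ∀ v, ZA (ZA v) = v := fun v => by
    have := congrFun (congrArg DFunLike.coe hZA2) v
    simpa using this
  have hc1' : ∀ v, XA (XB v) = XB (XA v) := fun v => by
    have := congrFun (congrArg DFunLike.coe hc1) v
    simpa using this
  have hc3' : ∀ v, ZA (XB v) = XB (ZA v) := fun v => by
    have := congrFun (congrArg DFunLike.coe hc3) v
    simpa using this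
  have hXX' : XA (XB ψ) = ψ := by simpa using hXX
  -- key : ⟪ψ, ZA ψ⟫ = 0
  have key : (inner ℂ ψ (ZA ψ) : ℂ) = 0 := by
    have step : (inner ℂ ψ (ZA ψ) : ℂ) = inner ℂ ψ (XA (ZA (XA ψ))) := by
      conv_lhs => rw [← hXX']
      calc (inner ℂ (XA (XB ψ)) (ZA (XA (XB ψ))) : ℂ)
          = inner ℂ (XB ψ) (XA (ZA (XA (XB ψ)))) := symXA _ _
        _ = inner ℂ (XB ψ) (XA (ZA (XB (XA ψ)))) := by rw [hc1']
        _ = inner ℂ (XB ψ) (XA (XB (ZA (XA ψ)))) := by rw [hc3']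
        _ = inner ℂ (XB ψ) (XB (XA (ZA (XA ψ)))) := by rw [hc1']
        _ = inner ℂ (XB (XB ψ)) (XA (ZA (XA ψ))) := (symXB _ _).symm
        _ = inner ℂ ψ (XA (ZA (XA ψ))) := by rw [hXB2']
    have step2 : XA (ZA (XA ψ)) = -(ZA ψ) := by
      rw [hanti', map_neg, hXA2']
    have h3 : (inner ℂ ψ (ZA ψ) : ℂ) = -(inner ℂ ψ (ZA ψ) : ℂ) := by
      calc (inner ℂ ψ (ZA ψ) : ℂ) = inner ℂ ψ (XA (ZA (XA ψ))) := step
        _ = inner ℂ ψ (-(ZA ψ)) := by rw [step2]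
        _ = -(inner ℂ ψ (ZA ψ) : ℂ) := inner_neg_right _ _
    linear_combination h3 / 2
  have hZAnorm : ‖ZA ψ‖ = 1 := by
    have h : (inner ℂ (ZA ψ) (ZA ψ) : ℂ) = inner ℂ ψ ψ := by
      calc (inner ℂ (ZA ψ) (ZA ψ) : ℂ) = inner ℂ ψ (ZA (ZA ψ)) := symZA _ _
        _ = inner ℂ ψ ψ := by rw [hZA2']
    rw [inner_self_eq_norm_sq_to_K, inner_self_eq_norm_sq_to_K] at h
    have h2 : ‖ZA ψ‖ ^ 2 = ‖ψ‖ ^ 2 := by exact_mod_cast h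
    nlinarith [norm_nonneg (ZA ψ), norm_nonneg ψ]
  -- expand (1+ZA)² ψ
  have hexp : ((1 + ZA) ∘L (1 + ZA)) ψ = (2 : ℂ) • (ψ + ZA ψ) := by
    simp only [comp_apply, add_apply, one_apply_eq_self, map_add, hZA2']
    module
  have hnv : ‖ψ + ZA ψ‖ = Real.sqrt 2 := by
    have hsq : ‖ψ + ZA ψ‖ ^ 2 = 2 := by
      rw [@norm_add_sq ℂ]
      rw [key]
      norm_num [hψ, hZAnorm]
    rw [← hsq]
    rw [Real.sqrt_sq (norm_nonneg _)]
  rw [hφ, hexp, norm_smul, norm_smul]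
  have h2 : (0:ℝ) < Real.sqrt 2 := Real.sqrt_pos.mpr (by norm_num)
  rw [hnv]
  simp only [Complex.norm_ofNat, Real.norm_eq_abs]
  rw [abs_of_pos (by positivity)]
  field_simp
end

section
/- Let n ≥ 2 and define for i = 1,…,n the qubit observables A_i = sin(φ_i)X + cos(φ_i)Z with φ_i = (i−1)π/n, and B_i = sin(φ'_i)X + cos(φ'_i)Z with φ'_i = (2i−1)π/(2n), where X, Z are the Pauli matrices. Then with the convention A_{n+1} = −A_1, the expectation ⟨φ₊| Σ_{i=1}^n (A_i ⊗ B_i + A_{i+1} ⊗ B_i) |φ₊⟩ of the chained Bell operator in the maximally entangled state φ₊ = (|00⟩+|11⟩)/√2 equals 2n·cos(π/(2n)). -/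
open Matrix Finset
open scoped Kronecker

lemma corr_aux (s c s' c' : ℝ) :
    star (fun p : Fin 2 × Fin 2 => if p.1 = p.2 then ((1 / Real.sqrt 2 : ℝ) : ℂ) else 0) ⬝ᵥ
      ((((s:ℂ) • (!![0, 1; 1, 0] : Matrix (Fin 2) (Fin 2) ℂ) +
          (c:ℂ) • (!![1, 0; 0, -1] : Matrix (Fin 2) (Fin 2) ℂ)) ⊗ₖ
        ((s':ℂ) • (!![0, 1; 1, 0] : Matrix (Fin 2) (Fin 2) ℂ) +
          (c':ℂ) • (!![1, 0; 0, -1] : Matrix (Fin 2) (Fin 2) ℂ))).mulVec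
        (fun p : Fin 2 × Fin 2 => if p.1 = p.2 then ((1 / Real.sqrt 2 : ℝ) : ℂ) else 0))
      = ((s * s' + c * c' : ℝ) : ℂ) := by
  have h2 : (Real.sqrt 2 : ℝ) ^ 2 = 2 := Real.sq_sqrt (by norm_num)
  have hs : (Real.sqrt 2 : ℝ) ≠ 0 := by positivity
  simp only [dotProduct, Matrix.mulVec, Fintype.sum_prod_type, Fin.sum_univ_two,
    Matrix.kroneckerMap_apply, Pi.star_apply, Matrix.add_apply, Matrix.smul_apply,
    Matrix.cons_val', Matrix.cons_val_zero, Matrix.cons_val_one, Matrix.head_cons,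
    Matrix.empty_val', Matrix.cons_val_fin_one, Matrix.head_fin_const]
  norm_num [Complex.ext_iff, RCLike.star_def, Complex.conj_ofReal]
  ring_nf
  rw [h2]; ring

/-- The chained Bell operator evaluated in the maximally entangled state gives
`2n cos(π/(2n))`. Here `A i = sin((i-1)π/n) X + cos((i-1)π/n) Z` for all `i`
(so that `A (n+1) = -A 1` automatically) and `B i = sin((2i-1)π/(2n)) X + cos((2i-1)π/(2n)) Z`. -/
theorem chained_bell_value_maximally_entangled (n : ℕ) (hn : 2 ≤ n) :
    let X : Matrix (Fin 2) (Fin 2) ℂ := !![0, 1; 1, 0]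
    let Z : Matrix (Fin 2) (Fin 2) ℂ := !![1, 0; 0, -1]
    let A : ℕ → Matrix (Fin 2) (Fin 2) ℂ := fun i =>
      ((Real.sin (((i : ℝ) - 1) * Real.pi / n) : ℂ) • X +
       (Real.cos (((i : ℝ) - 1) * Real.pi / n) : ℂ) • Z)
    let B : ℕ → Matrix (Fin 2) (Fin 2) ℂ := fun i =>
      ((Real.sin ((2 * (i : ℝ) - 1) * Real.pi / (2 * n)) : ℂ) • X +
       (Real.cos ((2 * (i : ℝ) - 1) * Real.pi / (2 * n)) : ℂ) • Z)
    let φ : Fin 2 × Fin 2 → ℂ := fun p => if p.1 = p.2 then (1 / Real.sqrt 2 : ℝ) else 0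
    star φ ⬝ᵥ (∑ i ∈ Finset.Icc 1 n,
        ((A i ⊗ₖ B i) + (A (i + 1) ⊗ₖ B i))).mulVec φ =
      (2 * n * Real.cos (Real.pi / (2 * n)) : ℝ) := by
  intro X Z A B φ
  have hn0 : (n : ℝ) ≠ 0 := by
    have : 0 < n := by omega
    exact_mod_cast this.ne'
  have hsum : (∑ i ∈ Finset.Icc 1 n, ((A i ⊗ₖ B i) + (A (i + 1) ⊗ₖ B i))).mulVec φ
      = ∑ i ∈ Finset.Icc 1 n, ((A i ⊗ₖ B i) + (A (i + 1) ⊗ₖ B i)).mulVec φ :=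
    map_sum (Matrix.mulVec.addMonoidHomLeft φ) _ _
  have hdot : star φ ⬝ᵥ (∑ i ∈ Finset.Icc 1 n, ((A i ⊗ₖ B i) + (A (i + 1) ⊗ₖ B i)).mulVec φ)
      = ∑ i ∈ Finset.Icc 1 n, star φ ⬝ᵥ ((A i ⊗ₖ B i) + (A (i + 1) ⊗ₖ B i)).mulVec φ := by
    simp only [dotProduct, Finset.sum_apply, Finset.mul_sum]
    exact Finset.sum_comm
  rw [hsum, hdot]
  have key : ∀ i ∈ Finset.Icc 1 n,
      star φ ⬝ᵥ ((A i ⊗ₖ B i) + (A (i + 1) ⊗ₖ B i)).mulVec φ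
        = ((2 * Real.cos (Real.pi / (2 * n)) : ℝ) : ℂ) := by
    intro i _
    rw [Matrix.add_mulVec, dotProduct_add]
    simp only [A, B, X, Z, φ]
    rw [corr_aux, corr_aux]
    have e1 : Real.sin (((i : ℝ) - 1) * Real.pi / n) *
          Real.sin ((2 * (i : ℝ) - 1) * Real.pi / (2 * n)) +
        Real.cos (((i : ℝ) - 1) * Real.pi / n) *
          Real.cos ((2 * (i : ℝ) - 1) * Real.pi / (2 * n))
        = Real.cos (Real.pi / (2 * n)) := by
      rw [show Real.pi / (2 * n) =
          (2 * (i : ℝ) - 1) * Real.pi / (2 * n) - ((i : ℝ) - 1) * Real.pi / n by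
        field_simp; ring]
      rw [Real.cos_sub]; ring
    have e2 : Real.sin ((((i + 1 : ℕ) : ℝ) - 1) * Real.pi / n) *
          Real.sin ((2 * (i : ℝ) - 1) * Real.pi / (2 * n)) +
        Real.cos ((((i + 1 : ℕ) : ℝ) - 1) * Real.pi / n) *
          Real.cos ((2 * (i : ℝ) - 1) * Real.pi / (2 * n))
        = Real.cos (Real.pi / (2 * n)) := by
      rw [show Real.pi / (2 * n) =
          (((i + 1 : ℕ) : ℝ) - 1) * Real.pi / n - (2 * (i : ℝ) - 1) * Real.pi / (2 * n) by
        push_cast; field_simp; ring]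
      rw [Real.cos_sub]; ring
    rw [e1, e2]
    push_cast; ring
  rw [Finset.sum_congr rfl key, Finset.sum_const, Nat.card_Icc]
  simp only [Nat.add_sub_cancel, nsmul_eq_mul]
  push_cast; ring
end

section
/- Let n ≥ 2 and let B_n be the chained Bell operator Σ_{i=1}^n (A_i ⊗ B_i + A_{i+1} ⊗ B_i) (with A_{n+1} = −A_1) where A_i, B_i are arbitrary self-adjoint operators on a Hilbert space with A_i² = B_i² = 1 and all A_i commute with all B_j. Then the operator norm of B_n is at most 2n·cos(π/(2n)). -/
open ContinuousLinearMap Finset Real InnerProductGeometry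

/-!
With `u i = A i ψ`, self-adjointness of `A i` turns `Re ⟪ψ, (A i + A (i + 1)) B i ψ⟫` into
`Re ⟪u i + u (i + 1), B i ψ⟫ ≤ ‖u i + u (i + 1)‖`, where the `u i` are unit vectors with
`u (n + 1) = -u 1`. If `θ i` is the angle between `u i` and `u (i + 1)`, then
`‖u i + u (i + 1)‖ = 2 cos (θ i / 2)`, the triangle inequality for angles gives
`∑ θ i ≥ angle (u 1) (-u 1) = π`, and concavity of `cos` on `[0, π / 2]` (Jensen) bounds
`∑ cos (θ i / 2)` by `n cos (π / 2n)`.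
-/

theorem sum_cos_half_le_of_pi_le_sum {n : ℕ} {θ : ℕ → ℝ}
    (hθ : ∀ i ∈ range n, θ i ∈ Set.Icc 0 π) (hsum : π ≤ ∑ i ∈ range n, θ i) :
    ∑ i ∈ range n, cos (θ i / 2) ≤ n * cos (π / (2 * n)) := by
  obtain rfl | hn := n.eq_zero_or_pos
  · simp at hsum
    linarith [pi_pos]
  have hn_pos : (0 : ℝ) < n := by exact_mod_cast hn
  have hjensen : ∑ i ∈ range n, (n : ℝ)⁻¹ • cos (θ i / 2) ≤
      cos (∑ i ∈ range n, (n : ℝ)⁻¹ • (θ i / 2)) :=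
    strictConcaveOn_cos_Icc.concaveOn.le_map_sum (fun _ _ => by positivity)
      (by simp [hn_pos.ne'])
      (fun i hi => ⟨by linarith [(hθ i hi).1, pi_pos], by linarith [(hθ i hi).2]⟩)
  have hmax : ∑ i ∈ range n, θ i ≤ n * π := by
    simpa using sum_le_sum fun i hi => (hθ i hi).2
  have hmono : cos ((∑ i ∈ range n, θ i) / (2 * n)) ≤ cos (π / (2 * n)) :=
    cos_le_cos_of_nonneg_of_le_pi (by positivity)
      (by rw [div_le_iff₀ (by positivity)]; nlinarith [pi_pos])
      (by gcongr)
  have hmean : ∑ i ∈ range n, (n : ℝ)⁻¹ • (θ i / 2) = (∑ i ∈ range n, θ i) / (2 * n) := by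
    rw [← smul_sum, ← sum_div, smul_eq_mul]
    field_simp
  rw [← smul_sum, smul_eq_mul, hmean, inv_mul_le_iff₀ hn_pos] at hjensen
  exact hjensen.trans (mul_le_mul_of_nonneg_left hmono hn_pos.le)

section RealInnerProductSpace

variable {V : Type*} [NormedAddCommGroup V] [InnerProductSpace ℝ V]

theorem norm_add_eq_two_mul_cos_angle_div_two {x y : V} (hx : ‖x‖ = 1) (hy : ‖y‖ = 1) :
    ‖x + y‖ = 2 * cos (angle x y / 2) := by
  have hcos : 0 ≤ cos (angle x y / 2) := cos_nonneg_of_mem_Icc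
    ⟨by linarith [angle_nonneg x y, pi_pos], by linarith [angle_le_pi x y]⟩
  have hsq : ‖x + y‖ ^ 2 = (2 * cos (angle x y / 2)) ^ 2 := by
    rw [norm_add_sq_real, ← cos_angle_mul_norm_mul_norm, hx, hy, mul_pow, cos_sq,
      mul_div_cancel₀ _ two_ne_zero]
    ring
  exact (pow_left_inj₀ (norm_nonneg _) (by positivity) two_ne_zero).mp hsq

theorem angle_le_sum_angle_succ {u : ℕ → V} (h0 : u 0 ≠ 0) (n : ℕ) :
    angle (u 0) (u n) ≤ ∑ i ∈ range n, angle (u i) (u (i + 1)) := by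
  induction n with
  | zero => simp [angle_self h0]
  | succ n ih =>
    rw [sum_range_succ]
    linarith [angle_le_angle_add_angle (u 0) (u n) (u (n + 1))]

theorem sum_norm_add_succ_le_of_eq_neg {n : ℕ} {u : ℕ → V} (hu : ∀ i < n, ‖u i‖ = 1)
    (hneg : u n = -u 0) :
    ∑ i ∈ range n, ‖u i + u (i + 1)‖ ≤ 2 * n * cos (π / (2 * n)) := by
  obtain rfl | hn := n.eq_zero_or_pos
  · simp
  have hu_le : ∀ i ≤ n, ‖u i‖ = 1 := fun i hi => hi.lt_or_eq.elim (hu i) <| by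
    rintro rfl
    rw [hneg, norm_neg, hu 0 hn]
  have h0 : u 0 ≠ 0 := norm_ne_zero_iff.mp (by simp [hu 0 hn])
  have hpi : π ≤ ∑ i ∈ range n, angle (u i) (u (i + 1)) := by
    simpa [hneg, angle_neg_right, angle_self h0] using angle_le_sum_angle_succ h0 n
  calc ∑ i ∈ range n, ‖u i + u (i + 1)‖
        = 2 * ∑ i ∈ range n, cos (angle (u i) (u (i + 1)) / 2) := by
        rw [mul_sum]
        refine sum_congr rfl fun i hi => ?_
        have hi : i < n := mem_range.mp hi
        exact norm_add_eq_two_mul_cos_angle_div_two (hu_le i hi.le) (hu_le (i + 1) hi)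
    _ ≤ 2 * (n * cos (π / (2 * n))) := by
        gcongr
        exact sum_cos_half_le_of_pi_le_sum (fun _ _ => ⟨angle_nonneg _ _, angle_le_pi _ _⟩) hpi
    _ = 2 * n * cos (π / (2 * n)) := by ring

end RealInnerProductSpace

section Operators

variable {𝕜 E : Type*} [RCLike 𝕜] [NormedAddCommGroup E] [InnerProductSpace 𝕜 E] [CompleteSpace E]

theorem re_inner_comp_apply_le {S : E →L[𝕜] E} (hS : IsSelfAdjoint S) (R : E →L[𝕜] E) (ψ : E) :
    RCLike.re (inner 𝕜 ψ ((S ∘L R) ψ)) ≤ ‖S ψ‖ * ‖R ψ‖ := by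
  rw [comp_apply, ← adjoint_inner_left, hS.adjoint_eq]
  exact re_inner_le_norm _ _

theorem norm_map_of_isSelfAdjoint_of_comp_self_eq_one {T : E →L[𝕜] E} (hT : IsSelfAdjoint T)
    (hT2 : T ∘L T = 1) (ψ : E) : ‖T ψ‖ = ‖ψ‖ :=
  T.norm_map_iff_adjoint_comp_self.mpr (by rwa [hT.adjoint_eq]) ψ

end Operators

theorem chained_bell_quantum_bound_general
    {H : Type*} [NormedAddCommGroup H] [InnerProductSpace ℂ H] [CompleteSpace H]
    (n : ℕ)
    (A B : ℕ → (H →L[ℂ] H))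
    (hAsa : ∀ i, 1 ≤ i → i ≤ n → IsSelfAdjoint (A i))
    (hBsa : ∀ i, 1 ≤ i → i ≤ n → IsSelfAdjoint (B i))
    (hA2 : ∀ i, 1 ≤ i → i ≤ n → A i ∘L A i = 1)
    (hB2 : ∀ i, 1 ≤ i → i ≤ n → B i ∘L B i = 1)
    (hAn1 : A (n + 1) = -A 1) :
    ∀ ψ : H, ‖ψ‖ = 1 →
      ((inner ℂ ψ ((∑ i ∈ Finset.Icc 1 n,
          (A i ∘L B i + A (i + 1) ∘L B i)) ψ) : ℂ)).re ≤
        2 * n * Real.cos (Real.pi / (2 * n)) := by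
  intro ψ hψ
  obtain rfl | hn := n.eq_zero_or_pos
  · simp
  have hunit {T : H →L[ℂ] H} (hT : IsSelfAdjoint T) (hT2 : T ∘L T = 1) : ‖T ψ‖ = 1 :=
    (norm_map_of_isSelfAdjoint_of_comp_self_eq_one hT hT2 ψ).trans hψ
  have hAsa_succ : ∀ i ∈ Icc 1 n, IsSelfAdjoint (A (i + 1)) := by
    intro i hi
    rcases (mem_Icc.mp hi).2.lt_or_eq with hlt | rfl
    · exact hAsa (i + 1) (by omega) hlt
    · exact hAn1 ▸ (hAsa 1 le_rfl hn).neg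
  have hterm : ∀ i ∈ Icc 1 n,
      (inner ℂ ψ ((A i ∘L B i + A (i + 1) ∘L B i) ψ)).re ≤ ‖A i ψ + A (i + 1) ψ‖ := by
    intro i hi
    obtain ⟨hi1, hin⟩ := mem_Icc.mp hi
    rw [← add_comp]
    simpa only [RCLike.re_to_complex, add_apply, hunit (hBsa i hi1 hin) (hB2 i hi1 hin),
      mul_one] using
      re_inner_comp_apply_le ((hAsa i hi1 hin).add (hAsa_succ i hi)) (B i) ψ
  let := InnerProductSpace.rclikeToReal ℂ H
  calc (inner ℂ ψ ((∑ i ∈ Icc 1 n, (A i ∘L B i + A (i + 1) ∘L B i)) ψ)).re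
      = ∑ i ∈ Icc 1 n, (inner ℂ ψ ((A i ∘L B i + A (i + 1) ∘L B i) ψ)).re := by
        rw [_root_.sum_apply, inner_sum, Complex.re_sum]
    _ ≤ ∑ i ∈ Icc 1 n, ‖A i ψ + A (i + 1) ψ‖ := sum_le_sum hterm
    _ = ∑ i ∈ range n, ‖A (i + 1) ψ + A (i + 1 + 1) ψ‖ := by
        rw [← Ico_add_one_right_eq_Icc, sum_Ico_eq_sum_range, add_tsub_cancel_right]
        simp only [add_comm 1]
    _ ≤ 2 * n * cos (π / (2 * n)) :=
        sum_norm_add_succ_le_of_eq_neg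
          (fun i hi => hunit (hAsa (i + 1) (by omega) hi) (hA2 (i + 1) (by omega) hi))
          (by simp [hAn1])

/-- Tsirelson-type bound for the chained Bell operator: for self-adjoint binary
observables `A i`, `B i` (with `A (n+1) = -A 1` and Alice's operators commuting
with Bob's), the quantum value is at most `2n cos(π/(2n))`. -/
theorem chained_bell_quantum_bound
    {H : Type*} [NormedAddCommGroup H] [InnerProductSpace ℂ H] [CompleteSpace H]
    (n : ℕ) (hn : 2 ≤ n)
    (A B : ℕ → (H →L[ℂ] H))
    (hAsa : ∀ i, 1 ≤ i → i ≤ n → IsSelfAdjoint (A i))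
    (hBsa : ∀ i, 1 ≤ i → i ≤ n → IsSelfAdjoint (B i))
    (hA2 : ∀ i, 1 ≤ i → i ≤ n → A i ∘L A i = 1)
    (hB2 : ∀ i, 1 ≤ i → i ≤ n → B i ∘L B i = 1)
    (hAn1 : A (n + 1) = -A 1)
    (hcomm : ∀ i j, A i ∘L B j = B j ∘L A i) :
    ∀ ψ : H, ‖ψ‖ = 1 →
      ((inner ℂ ψ ((∑ i ∈ Finset.Icc 1 n,
          (A i ∘L B i + A (i + 1) ∘L B i)) ψ) : ℂ)).re ≤
        2 * n * Real.cos (Real.pi / (2 * n)) :=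
  chained_bell_quantum_bound_general n A B hAsa hBsa hA2 hB2 hAn1
end

section
/- Let H be a Hilbert space, ψ ∈ H a unit vector, and let X_A, Z_A, X_B, Z_B be unitary operators such that [X_A, X_B] = [X_A, Z_B] = [Z_A, X_B] = [Z_A, Z_B] = 0, with ‖(X_A − X_B)ψ‖ ≤ δ₁, ‖(Z_A − Z_B)ψ‖ ≤ δ₁, and ‖(Z_A X_B + X_A Z_A)ψ‖ ≤ δ₂. Then |⟨ψ, Z_A ψ⟩| ≤ (δ₁ + δ₂)/2. -/
open ContinuousLinearMap

/-- With `b = ⟪X_A ψ, Z_A X_B ψ⟫`, the numbers `b + ⟪ψ, Z_A ψ⟫` and `b - ⟪ψ, Z_A ψ⟫` are inner products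
with `(Z_A X_B + X_A Z_A) ψ` and `(X_A - X_B) ψ` respectively, hence small; their difference is
`2 ⟪ψ, Z_A ψ⟫`. -/
theorem two_mul_norm_inner_map_le {𝕜 E : Type*} [RCLike 𝕜] [NormedAddCommGroup E]
    [InnerProductSpace 𝕜 E] (ψ : E) (XA ZA XB : E →L[𝕜] E)
    (hXA : ∀ x y, inner 𝕜 (XA x) (XA y) = inner 𝕜 x y) (hZA : ∀ x, ‖ZA x‖ = ‖x‖)
    (hXB : ∀ x y, inner 𝕜 (XB x) (XB y) = inner 𝕜 x y) (hcomm : ZA ∘L XB = XB ∘L ZA) :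
    2 * ‖inner 𝕜 ψ (ZA ψ)‖ ≤ ‖ψ‖ * (‖(XA - XB) ψ‖ + ‖(ZA ∘L XB + XA ∘L ZA) ψ‖) := by
  have hcomm_ψ : ZA (XB ψ) = XB (ZA ψ) := congr($hcomm ψ)
  have hsum : inner 𝕜 (XA ψ) ((ZA ∘L XB + XA ∘L ZA) ψ)
      = inner 𝕜 (XA ψ) (ZA (XB ψ)) + inner 𝕜 ψ (ZA ψ) := by
    rw [add_apply, comp_apply, comp_apply, inner_add_right, hXA]
  have hdiff : inner 𝕜 ((XA - XB) ψ) (ZA (XB ψ))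
      = inner 𝕜 (XA ψ) (ZA (XB ψ)) - inner 𝕜 ψ (ZA ψ) := by
    rw [sub_apply, inner_sub_left, hcomm_ψ, hXB]
  have hnorm_XA : ‖XA ψ‖ = ‖ψ‖ := (LinearMap.norm_map_iff_inner_map_map XA).mpr hXA ψ
  have hnorm_ZAXB : ‖ZA (XB ψ)‖ = ‖ψ‖ := by
    rw [hZA, (LinearMap.norm_map_iff_inner_map_map XB).mpr hXB]
  set a := inner 𝕜 ψ (ZA ψ)
  set b := inner 𝕜 (XA ψ) (ZA (XB ψ))
  calc 2 * ‖a‖ = ‖(b + a) - (b - a)‖ := by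
        rw [add_sub_sub_cancel, ← two_mul, norm_mul, RCLike.norm_two]
    _ ≤ ‖b - a‖ + ‖b + a‖ := by rw [add_comm ‖b - a‖]; exact norm_sub_le _ _
    _ ≤ ‖(XA - XB) ψ‖ * ‖ZA (XB ψ)‖ + ‖XA ψ‖ * ‖(ZA ∘L XB + XA ∘L ZA) ψ‖ := by
        rw [← hsum, ← hdiff]
        gcongr <;> exact norm_inner_le_norm _ _
    _ = ‖ψ‖ * (‖(XA - XB) ψ‖ + ‖(ZA ∘L XB + XA ∘L ZA) ψ‖) := by
        rw [hnorm_XA, hnorm_ZAXB]; ring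

theorem robust_junk_overlap_general
    {H : Type*} [NormedAddCommGroup H] [InnerProductSpace ℂ H] [CompleteSpace H]
    (ψ : H) (hψ : ‖ψ‖ = 1)
    (XA ZA XB : H →L[ℂ] H)
    (hXAu1 : (ContinuousLinearMap.adjoint XA) ∘L XA = 1)
    (hZAu1 : (ContinuousLinearMap.adjoint ZA) ∘L ZA = 1)
    (hXBu1 : (ContinuousLinearMap.adjoint XB) ∘L XB = 1)
    (hc3 : ZA ∘L XB = XB ∘L ZA)
    (δ₁ δ₂ : ℝ)
    (h1 : ‖(XA - XB) ψ‖ ≤ δ₁)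
    (h3 : ‖(ZA ∘L XB + XA ∘L ZA) ψ‖ ≤ δ₂) :
    ‖(inner ℂ ψ (ZA ψ) : ℂ)‖ ≤ (δ₁ + δ₂) / 2 := by
  have key := two_mul_norm_inner_map_le ψ XA ZA XB
    ((inner_map_map_iff_adjoint_comp_self XA).mpr hXAu1)
    ((norm_map_iff_adjoint_comp_self ZA).mpr hZAu1)
    ((inner_map_map_iff_adjoint_comp_self XB).mpr hXBu1) hc3
  rw [hψ, one_mul] at key
  linarith

/-- Robust junk-state overlap estimate. -/
theorem robust_junk_overlap
    {H : Type*} [NormedAddCommGroup H] [InnerProductSpace ℂ H] [CompleteSpace H]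
    (ψ : H) (hψ : ‖ψ‖ = 1)
    (XA ZA XB ZB : H →L[ℂ] H)
    (hXAu1 : (ContinuousLinearMap.adjoint XA) ∘L XA = 1)
    (hXAu2 : XA ∘L (ContinuousLinearMap.adjoint XA) = 1)
    (hZAu1 : (ContinuousLinearMap.adjoint ZA) ∘L ZA = 1)
    (hZAu2 : ZA ∘L (ContinuousLinearMap.adjoint ZA) = 1)
    (hXBu1 : (ContinuousLinearMap.adjoint XB) ∘L XB = 1)
    (hXBu2 : XB ∘L (ContinuousLinearMap.adjoint XB) = 1)
    (hZBu1 : (ContinuousLinearMap.adjoint ZB) ∘L ZB = 1)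
    (hZBu2 : ZB ∘L (ContinuousLinearMap.adjoint ZB) = 1)
    (hc1 : XA ∘L XB = XB ∘L XA) (hc2 : XA ∘L ZB = ZB ∘L XA)
    (hc3 : ZA ∘L XB = XB ∘L ZA) (hc4 : ZA ∘L ZB = ZB ∘L ZA)
    (δ₁ δ₂ : ℝ)
    (h1 : ‖(XA - XB) ψ‖ ≤ δ₁)
    (h2 : ‖(ZA - ZB) ψ‖ ≤ δ₁)
    (h3 : ‖(ZA ∘L XB + XA ∘L ZA) ψ‖ ≤ δ₂) :
    ‖(inner ℂ ψ (ZA ψ) : ℂ)‖ ≤ (δ₁ + δ₂) / 2 :=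
  robust_junk_overlap_general ψ hψ XA ZA XB hXAu1 hZAu1 hXBu1 hc3 δ₁ δ₂ h1 h3
end
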